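/- Let g_m denote the m-th moment of the standard normal distribution (g_m = m!/(2^{m/2}(m/2)!) for even m, g_m = 0 for odd m). Then for every integer N ≥ 1 and every integer m ≥ 1, the restricted sum over tuples with all parts strictly less than m satisfies Σ_{k ∈ ℕ^N, k_1+…+k_N = m, k_i ≤ m-1 for all i} (m choose k_1,…,k_N) · g_{k_1}···g_{k_N} = g_m · (N^{m/2} - N). -/

import Mathlib

/-!
Peeling off one coordinate of a multinomial coefficient leaves a binomial coefficient, so the
unrestricted sum over `N` parts is governed by the two-variable identity
`∑_{a+b=m} C(m,a) g_a x^{a/2} g_b y^{b/2} = g_m (x+y)^{m/2}` (the moments of `N(0,x) + N(0,y)`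
are those of `N(0,x+y)`). For `m = 2n` only even parts contribute, and the identity reduces to
`C(2n,2i) g_{2i} g_{2j} = g_{2n} C(n,i)` and the binomial theorem. By induction the unrestricted
sum is `g_m N^{m/2}`; the restriction removes exactly the `N` tuples `m • eᵢ`, each contributing
`g_m`.
-/

/-- `g_m`, the `m`-th moment of the standard normal distribution:
`m!/(2^{m/2}(m/2)!)` for even `m` and `0` for odd `m`. -/
noncomputable def gaussianMoment (m : ℕ) : ℝ :=
  if Even m then (m.factorial : ℝ) / (2 ^ (m / 2) * ((m / 2).factorial : ℝ)) else 0

open Finset Nat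

@[simp]
lemma gaussianMoment_zero : gaussianMoment 0 = 1 := by
  simp [gaussianMoment]

lemma gaussianMoment_of_not_even {m : ℕ} (h : ¬Even m) : gaussianMoment m = 0 := by
  simp [gaussianMoment, h]

lemma gaussianMoment_two_mul (n : ℕ) :
    gaussianMoment (2 * n) = ((2 * n)! : ℝ) / (2 ^ n * n !) := by
  simp [gaussianMoment]

lemma gaussianMoment_mul_rpow_half (x : ℝ) (m : ℕ) :
    gaussianMoment m * x ^ ((m : ℝ) / 2) = gaussianMoment m * x ^ (m / 2) := by
  by_cases hm : Even m
  · obtain ⟨n, rfl⟩ := hm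
    rw [← two_mul, Nat.mul_div_cancel_left n two_pos, ← Real.rpow_natCast x n]
    push_cast
    ring_nf
  · simp [gaussianMoment_of_not_even hm]

lemma cast_choose_mul_gaussianMoment_mul_gaussianMoment (i j : ℕ) :
    ((2 * (i + j)).choose (2 * i) : ℝ) * gaussianMoment (2 * i) * gaussianMoment (2 * j)
      = gaussianMoment (2 * (i + j)) * (i + j).choose i := by
  rw [mul_add, cast_add_choose, cast_add_choose, gaussianMoment_two_mul, gaussianMoment_two_mul,
    ← mul_add, gaussianMoment_two_mul, pow_add]
  field_simp

lemma sum_antidiagonal_two_mul {M : Type*} [AddCommMonoid M] (n : ℕ) (f : ℕ × ℕ → M)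
    (hf : ∀ p ∈ antidiagonal (2 * n), ¬Even p.1 → f p = 0) :
    ∑ p ∈ antidiagonal (2 * n), f p = ∑ p ∈ antidiagonal n, f (2 * p.1, 2 * p.2) := by
  symm
  refine sum_of_injOn (fun p => (2 * p.1, 2 * p.2)) ?_ ?_ ?_ fun _ _ => rfl
  · intro p _ q _ h
    simp only [Prod.mk.injEq] at h
    ext <;> omega
  · intro p hp
    simp only [mem_coe, HasAntidiagonal.mem_antidiagonal] at hp ⊢
    omega
  · intro p hp hnot
    refine hf p hp fun ⟨a, ha⟩ => hnot ⟨(a, n - a), ?_, ?_⟩ <;>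
      simp only [mem_coe, HasAntidiagonal.mem_antidiagonal] at hp ⊢
    · omega
    · ext <;> simp <;> omega

lemma sum_antidiagonal_choose_mul_gaussianMoment (x y : ℝ) (m : ℕ) :
    ∑ p ∈ antidiagonal m, (m.choose p.1 : ℝ) * (gaussianMoment p.1 * x ^ (p.1 / 2)) *
        (gaussianMoment p.2 * y ^ (p.2 / 2))
      = gaussianMoment m * (x + y) ^ (m / 2) := by
  by_cases hm : Even m
  · obtain ⟨n, rfl⟩ := hm
    rw [← two_mul, Nat.mul_div_cancel_left n two_pos, (Commute.all x y).add_pow', mul_sum,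
      sum_antidiagonal_two_mul n _ fun p _ hp => by simp [gaussianMoment_of_not_even hp]]
    refine sum_congr rfl fun p hp => ?_
    obtain ⟨i, j⟩ := p
    rw [HasAntidiagonal.mem_antidiagonal] at hp
    subst hp
    simp only [Nat.mul_div_cancel_left _ two_pos, nsmul_eq_mul]
    linear_combination (x ^ i * y ^ j) * cast_choose_mul_gaussianMoment_mul_gaussianMoment i j
  · rw [gaussianMoment_of_not_even hm, zero_mul]
    refine sum_eq_zero fun p hp => ?_
    rw [HasAntidiagonal.mem_antidiagonal] at hp
    by_cases h1 : Even p.1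
    · have h2 : ¬Even p.2 := fun h2 => hm (hp ▸ h1.add h2)
      simp [gaussianMoment_of_not_even h2]
    · simp [gaussianMoment_of_not_even h1]

section

variable {ι : Type*} [DecidableEq ι]

lemma multinomial_cons_add_ite {i : ι} {s : Finset ι} (hi : i ∉ s) (a : ℕ) {f : ι → ℕ}
    (hfi : f i = 0) :
    Nat.multinomial (s.cons i hi) (f + fun t => if t = i then a else 0)
      = (a + ∑ j ∈ s, f j).choose a * Nat.multinomial s f := by
  have hs : ∀ j ∈ s, (f + fun t => if t = i then a else 0) j = f j := fun j hj => by
    simp [ne_of_mem_of_not_mem hj hi]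
  rw [Nat.multinomial_cons, sum_congr rfl hs, Nat.multinomial_congr hs]
  simp [hfi]

lemma prod_cons_add_ite {M : Type*} [CommMonoid M] (g : ℕ → M) {i : ι} {s : Finset ι}
    (hi : i ∉ s) (a : ℕ) {f : ι → ℕ} (hfi : f i = 0) :
    ∏ j ∈ s.cons i hi, g (f j + if j = i then a else 0) = g a * ∏ j ∈ s, g (f j) := by
  rw [prod_cons, if_pos rfl, hfi, zero_add]
  congr 1
  exact prod_congr rfl fun j hj => by rw [if_neg (ne_of_mem_of_not_mem hj hi), add_zero]

-- `m / 2` is floor division; for odd `m` both sides vanish anyway since `g_m = 0`.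
theorem sum_piAntidiag_multinomial_mul_prod_gaussianMoment (s : Finset ι) (m : ℕ) :
    ∑ k ∈ s.piAntidiag m, (Nat.multinomial s k : ℝ) * ∏ i ∈ s, gaussianMoment (k i)
      = gaussianMoment m * (#s : ℝ) ^ (m / 2) := by
  induction s using Finset.cons_induction generalizing m with
  | empty =>
    rcases m with _ | _ | m
    · simp [gaussianMoment]
    · simp [gaussianMoment_of_not_even Nat.not_even_one]
    · simp
  | cons i s hi ih =>
    rw [piAntidiag_cons, sum_disjiUnion, card_cons, Nat.cast_succ, add_comm,
      ← sum_antidiagonal_choose_mul_gaussianMoment]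
    refine sum_congr rfl fun p hp => ?_
    rw [HasAntidiagonal.mem_antidiagonal] at hp
    simp only [one_pow, mul_one, ← ih, mul_sum, sum_map, addRightEmbedding_apply]
    refine sum_congr rfl fun f hf => ?_
    obtain ⟨hsum, hsupp⟩ := mem_piAntidiag.1 hf
    have hfi : f i = 0 := by_contra fun h => hi (hsupp i h)
    simp only [Pi.add_apply]
    rw [multinomial_cons_add_ite hi _ hfi, prod_cons_add_ite _ hi _ hfi, hsum, hp]
    push_cast
    ring

lemma eq_single_of_mem_piAntidiag {s : Finset ι} {m : ℕ} {k : ι → ℕ}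
    (hk : k ∈ s.piAntidiag m) {i : ι} (hki : k i = m) (hm : m ≠ 0) :
    i ∈ s ∧ k = Pi.single i m := by
  obtain ⟨hsum, hsupp⟩ := mem_piAntidiag.1 hk
  have hi : i ∈ s := hsupp i (hki ▸ hm)
  have hrest : ∑ j ∈ s.erase i, k j = 0 := by
    have := add_sum_erase s k hi
    rw [hki, hsum] at this
    omega
  refine ⟨hi, funext fun j => ?_⟩
  rcases eq_or_ne j i with rfl | hj
  · simp [hki]
  · rw [Pi.single_eq_of_ne hj]
    by_contra h
    exact h (sum_eq_zero_iff.1 hrest j (mem_erase.2 ⟨hj, hsupp j h⟩))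

lemma Pi.single_left_injective {M : Type*} [Zero M] {a : M} (ha : a ≠ 0) :
    Function.Injective (Pi.single · a : ι → ι → M) := fun i j hij => by
  by_contra h
  exact ha (by simpa [h] using congrFun hij i)

lemma sum_filter_piAntidiag_forall_ne {M : Type*} [AddCommGroup M] (s : Finset ι) {m : ℕ}
    [DecidablePred fun k : ι → ℕ => ∀ i ∈ s, k i ≠ m] (hm : m ≠ 0)
    (F : (ι → ℕ) → M) :
    ∑ k ∈ (s.piAntidiag m).filter (fun k => ∀ i ∈ s, k i ≠ m), F k
      = ∑ k ∈ s.piAntidiag m, F k - ∑ i ∈ s, F (Pi.single i m) := by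
  rw [eq_sub_iff_add_eq,
    ← sum_filter_add_sum_filter_not (s.piAntidiag m) (fun k => ∀ i ∈ s, k i ≠ m)]
  congr 1
  · rfl
  · classical
    rw [← sum_image (Pi.single_left_injective hm).injOn]
    congr 1
    ext k
    simp only [mem_filter, mem_image, not_forall, not_not, exists_prop]
    constructor
    · rintro ⟨i, hi, rfl⟩
      exact ⟨by simp [mem_piAntidiag, hi, Pi.single_apply], i, hi, by simp⟩
    · rintro ⟨hk, i, -, hki⟩
      obtain ⟨hi, rfl⟩ := eq_single_of_mem_piAntidiag hk hki hm
      exact ⟨i, hi, rfl⟩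

end

theorem gaussianMoment_multinomial_sum_restricted_general
    (N : ℕ) (m : ℕ) (hm : 1 ≤ m) :
    ∑ k ∈ (Finset.Nat.antidiagonalTuple N m).filter (fun k => ∀ i, k i ≤ m - 1),
        (Nat.multinomial Finset.univ k : ℝ) * ∏ i, gaussianMoment (k i)
      = gaussianMoment m * ((N : ℝ) ^ ((m : ℝ) / 2) - N) := by
  have hparts : ∀ k ∈ Finset.Nat.antidiagonalTuple N m,
      (∀ i, k i ≤ m - 1) ↔ ∀ i ∈ univ, k i ≠ m := fun k hk => by
    have hle : ∀ i, k i ≤ m := fun i => Finset.Nat.mem_antidiagonalTuple.1 hk ▸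
      single_le_sum (fun _ _ => Nat.zero_le _) (mem_univ i)
    simp only [mem_univ, true_implies]
    exact forall_congr' fun i => by have := hle i; omega
  rw [filter_congr hparts, ← piAntidiag_univ_fin_eq_antidiagonalTuple,
    sum_filter_piAntidiag_forall_ne _ (by omega),
    sum_piAntidiag_multinomial_mul_prod_gaussianMoment, Finset.card_fin, mul_sub,
    gaussianMoment_mul_rpow_half]
  simp [Nat.multinomial_single, Pi.single_apply, apply_ite gaussianMoment, mul_comm]

/-- **Restricted multinomial convolution identity for Gaussian moments**: summing only
over tuples all of whose parts are at most `m-1`,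
`∑_{k₁+⋯+k_N=m, kᵢ≤m-1} (m choose k₁,…,k_N) g_{k₁}⋯g_{k_N} = g_m · (N^{m/2} - N)`. -/
theorem gaussianMoment_multinomial_sum_restricted
    (N : ℕ) (hN : 1 ≤ N) (m : ℕ) (hm : 1 ≤ m) :
    ∑ k ∈ (Finset.Nat.antidiagonalTuple N m).filter (fun k => ∀ i, k i ≤ m - 1),
        (Nat.multinomial Finset.univ k : ℝ) * ∏ i, gaussianMoment (k i)
      = gaussianMoment m * ((N : ℝ) ^ ((m : ℝ) / 2) - N) :=
  gaussianMoment_multinomial_sum_restricted_general N m hm
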